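/- arXiv:2005.03185 — 2 statements merged into one kernel-verified Lean document; each statement's English description precedes it below -/
import Mathlib

section
/- The marginal probabilities of the Projection DPP are the leverage scores: if X ∈ R^{n×d} has full column rank and S is drawn with Pr{S} ∝ det(X_S)^2 over size-d subsets, then Pr{i ∈ S} = x_i^T (X^T X)^{-1} x_i for each i. -/
/-!
Doubling the row `xᵢ` of `X` turns `XᵀX` into `XᵀX + xᵢxᵢᵀ`. By the matrix determinant lemma the
determinant becomes `det(XᵀX) (1 + xᵢᵀ(XᵀX)⁻¹xᵢ)`; by Cauchy–Binet it becomes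
`∑ₛ det(X_S)² (1 + [i ∈ S]) = det(XᵀX) + ∑_{S ∋ i} det(X_S)²`, since doubling a row of `X` doubles
exactly the minors `det X_S` with `i ∈ S`. Comparing the two expressions gives the claim.
-/

open Matrix Finset

/-- The `d × d` submatrix of rows of `X` indexed by a subset `S` of size `d`. -/
noncomputable def rowSub {n d : ℕ} (X : Matrix (Fin n) (Fin d) ℝ) (S : Finset (Fin n))
    (h : S.card = d) : Matrix (Fin d) (Fin d) ℝ :=
  X.submatrix (fun i => S.orderEmbOfFin h i) id

section OrderEmbOfFin

variable {ι : Type*} [LinearOrder ι]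

theorem Finset.exists_perm_orderEmbOfFin_comp_eq {d : ℕ} {p : Fin d → ι}
    (hp : Function.Injective p) (h : (univ.image p).card = d) :
    ∃ σ : Equiv.Perm (Fin d), (univ.image p).orderEmbOfFin h ∘ σ = p := by
  set e := (univ.image p).orderIsoOfFin h
  have hmem : ∀ x, p x ∈ univ.image p := fun x => mem_image_of_mem p (mem_univ x)
  let τ : Fin d → Fin d := fun x => e.symm ⟨p x, hmem x⟩
  have hτ : Function.Injective τ := fun a b hab => hp <| by
    simpa [τ] using congrArg (fun z => (e z : ι)) hab
  refine ⟨Equiv.ofBijective τ (Finite.injective_iff_bijective.mp hτ), funext fun x => ?_⟩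
  simp [τ, e, ← coe_orderIsoOfFin_apply]

theorem Finset.sum_filter_injective_eq_sum_powersetCard [Fintype ι] {M : Type*}
    [AddCommMonoid M] {d : ℕ} (F : (Fin d → ι) → M) :
    ∑ p ∈ univ.filter Function.Injective, F p =
      ∑ S ∈ (powersetCard d (univ : Finset ι)).attach, ∑ σ : Equiv.Perm (Fin d),
        F (S.1.orderEmbOfFin (mem_powersetCard.mp S.2).2 ∘ σ) := by
  rw [sum_sigma']
  symm
  refine sum_bij (fun Sσ _ => Sσ.1.1.orderEmbOfFin (mem_powersetCard.mp Sσ.1.2).2 ∘ Sσ.2)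
    (fun Sσ _ => ?_) (fun Sσ _ Tτ _ he => ?_) (fun p hp => ?_) (fun _ _ => rfl)
  · simpa using (Finset.orderEmbOfFin _ _).injective.comp Sσ.2.injective
  · obtain ⟨⟨S, hS⟩, σ⟩ := Sσ
    obtain ⟨⟨T, hT⟩, τ⟩ := Tτ
    have hST : S = T := by
      simpa [Set.range_comp] using congrArg Set.range he
    subst hST
    have hστ : σ = τ := Equiv.ext fun x => (S.orderEmbOfFin _).injective (congrFun he x)
    rw [hστ]
  · have hp : Function.Injective p := (mem_filter.mp hp).2
    have h : (univ.image p).card = d := by simp [card_image_of_injective _ hp]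
    obtain ⟨σ, hσ⟩ := exists_perm_orderEmbOfFin_comp_eq hp h
    exact ⟨⟨⟨univ.image p, by simp [mem_powersetCard, h]⟩, σ⟩, by simp, hσ⟩

end OrderEmbOfFin

namespace Matrix

variable {m ι : Type*}

theorem submatrix_updateRow_apply_of_injective {α : Type*} [DecidableEq m] [DecidableEq ι]
    (X : Matrix ι m α) {f : m → ι} (hf : Function.Injective f) (j : m) (v : m → α) :
    (X.updateRow (f j) v).submatrix f id = (X.submatrix f id).updateRow j v := by
  ext a b
  by_cases ha : a = j
  · subst ha; simp
  · simp [ha, hf.ne ha]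

theorem submatrix_updateRow_of_notMem_range {α : Type*} [DecidableEq ι] (X : Matrix ι m α)
    {f : m → ι} {i : ι} (hi : i ∉ Set.range f) (v : m → α) :
    (X.updateRow i v).submatrix f id = X.submatrix f id := by
  ext a b
  have : f a ≠ i := fun h => hi ⟨a, h⟩
  simp [this]

variable {R : Type*} [CommRing R]

theorem det_mul_eq_sum_det_submatrix_mul_prod [Fintype m] [DecidableEq m] [Fintype ι]
    (A : Matrix m ι R) (B : Matrix ι m R) :
    (A * B).det = ∑ p : m → ι, (A.submatrix id p).det * ∏ k, B (p k) k := by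
  simp only [det_apply', mul_apply, prod_univ_sum, mul_sum, Fintype.piFinset_univ]
  rw [sum_comm]
  refine sum_congr rfl fun p _ => ?_
  rw [sum_mul]
  refine sum_congr rfl fun σ _ => ?_
  simp only [submatrix_apply, id, prod_mul_distrib]
  ring

theorem det_submatrix_eq_zero_of_not_injective [Fintype m] [DecidableEq m] (A : Matrix m ι R)
    {p : m → ι} (hp : ¬Function.Injective p) : (A.submatrix id p).det = 0 := by
  obtain ⟨a, b, hab, hne⟩ := Function.not_injective_iff.mp hp
  exact det_zero_of_column_eq hne fun k => by simp [hab]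

theorem sum_perm_det_submatrix_mul_prod [Fintype m] [DecidableEq m] (A : Matrix m ι R)
    (B : Matrix ι m R) (f : m → ι) :
    ∑ σ : Equiv.Perm m, (A.submatrix id (f ∘ σ)).det * ∏ k, B (f (σ k)) k =
      (A.submatrix id f).det * (B.submatrix f id).det := by
  rw [det_apply (B.submatrix f id), mul_sum]
  refine sum_congr rfl fun σ _ => ?_
  have hperm : A.submatrix id (f ∘ σ) = (A.submatrix id f).submatrix id σ := rfl
  rw [hperm, det_permute']
  simp only [submatrix_apply, id, Units.smul_def, zsmul_eq_mul]
  ring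

/-- **Cauchy–Binet formula**. -/
theorem det_mul_eq_sum_powersetCard [Fintype ι] [LinearOrder ι] {d : ℕ}
    (A : Matrix (Fin d) ι R) (B : Matrix ι (Fin d) R) :
    (A * B).det = ∑ S ∈ (powersetCard d (univ : Finset ι)).attach,
      (A.submatrix id (S.1.orderEmbOfFin (mem_powersetCard.mp S.2).2)).det *
        (B.submatrix (S.1.orderEmbOfFin (mem_powersetCard.mp S.2).2) id).det := by
  rw [det_mul_eq_sum_det_submatrix_mul_prod, ← sum_filter_of_ne (p := Function.Injective)
    fun p _ hp => ?_, sum_filter_injective_eq_sum_powersetCard]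
  · exact sum_congr rfl fun S _ => sum_perm_det_submatrix_mul_prod A B _
  · by_contra hinj
    simp [det_submatrix_eq_zero_of_not_injective A hinj] at hp

theorem det_transpose_mul_eq_sum_powersetCard [Fintype ι] [LinearOrder ι] {d : ℕ}
    (X Y : Matrix ι (Fin d) R) :
    (Xᵀ * Y).det = ∑ S ∈ (powersetCard d (univ : Finset ι)).attach,
      (X.submatrix (S.1.orderEmbOfFin (mem_powersetCard.mp S.2).2) id).det *
        (Y.submatrix (S.1.orderEmbOfFin (mem_powersetCard.mp S.2).2) id).det := by
  simp only [det_mul_eq_sum_powersetCard, ← transpose_submatrix, det_transpose]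

theorem det_submatrix_orderEmbOfFin_updateRow_smul [LinearOrder ι] {d : ℕ}
    (X : Matrix ι (Fin d) R) {S : Finset ι} (h : S.card = d) (i : ι) (c : R) :
    ((X.updateRow i (c • X i)).submatrix (S.orderEmbOfFin h) id).det =
      (if i ∈ S then c else 1) * (X.submatrix (S.orderEmbOfFin h) id).det := by
  have hrange : i ∈ Set.range (S.orderEmbOfFin h) ↔ i ∈ S := by rw [range_orderEmbOfFin]; rfl
  split_ifs with hi
  · obtain ⟨j, rfl⟩ := hrange.mpr hi
    rw [submatrix_updateRow_apply_of_injective _ (S.orderEmbOfFin h).injective,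
      det_updateRow_smul]
    exact congrArg (c * ·) (congrArg det (updateRow_eq_self _ j))
  · rw [submatrix_updateRow_of_notMem_range X (hrange.not.mpr hi), one_mul]

theorem mul_updateRow_add [Fintype ι] [DecidableEq ι] (M : Matrix m ι R) (X : Matrix ι m R)
    (i : ι) (v : m → R) : M * X.updateRow i (X i + v) = M * X + vecMulVec (Mᵀ i) v := by
  ext a b
  have hrow : ∀ k, X.updateRow i (X i + v) k b = X k b + if k = i then v b else 0 := by
    intro k
    by_cases hk : k = i
    · subst hk; simp
    · simp [hk]
  simp [mul_apply, hrow, mul_add, sum_add_distrib, vecMulVec_apply]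

theorem det_add_vecMulVec [Fintype m] [DecidableEq m] {A : Matrix m m R} (hA : IsUnit A.det)
    (u v : m → R) : (A + vecMulVec u v).det = A.det * (1 + v ⬝ᵥ (A⁻¹ *ᵥ u)) := by
  rw [vecMulVec_eq Unit, det_add_replicateCol_mul_replicateRow hA, Matrix.mul_assoc,
    ← replicateCol_mulVec, replicateRow_mul_replicateCol]
  simp

theorem isUnit_det_of_rank_eq_card [Fintype m] [DecidableEq m] {K : Type*} [Field K]
    {A : Matrix m m K} (h : A.rank = Fintype.card m) : IsUnit A.det := by
  rw [← isUnit_iff_isUnit_det, ← mulVec_surjective_iff_isUnit, ← coe_mulVecLin,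
    ← LinearMap.range_eq_top]
  apply Submodule.eq_top_of_finrank_eq
  rw [← rank, h, Module.finrank_fintype_fun_eq_card]

end Matrix

/-- The marginals of the Projection DPP are the leverage scores: if `X` has full column rank
and `Pr{S} = det(X_S)²/det(XᵀX)` over size-`d` subsets, then
`Pr{i ∈ S} = xᵢᵀ (XᵀX)⁻¹ xᵢ`. -/
theorem projection_dpp_marginals {n d : ℕ} (X : Matrix (Fin n) (Fin d) ℝ)
    (hrank : X.rank = d) (i : Fin n) :
    ∑ S ∈ (Finset.powersetCard d (Finset.univ : Finset (Fin n))).attach,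
      (if i ∈ S.1 then
        (rowSub X S.1 (Finset.mem_powersetCard.mp S.2).2).det ^ 2 / (Xᵀ * X).det
      else 0)
      = X i ⬝ᵥ ((Xᵀ * X)⁻¹ *ᵥ X i) := by
  have hgram : IsUnit (Xᵀ * X).det :=
    isUnit_det_of_rank_eq_card (by rw [rank_transpose_mul_self, hrank, Fintype.card_fin])
  have hcauchy_binet : (Xᵀ * X.updateRow i (X i + X i)).det = (Xᵀ * X).det +
      ∑ S ∈ (powersetCard d (univ : Finset (Fin n))).attach,
        if i ∈ S.1 then (rowSub X S.1 (mem_powersetCard.mp S.2).2).det ^ 2 else 0 := by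
    unfold rowSub
    rw [det_transpose_mul_eq_sum_powersetCard, det_transpose_mul_eq_sum_powersetCard X X,
      ← sum_add_distrib]
    refine sum_congr rfl fun S _ => ?_
    rw [← two_smul ℝ (X i), det_submatrix_orderEmbOfFin_updateRow_smul]
    split_ifs <;> ring
  have hmatrix_det_lemma : (Xᵀ * X.updateRow i (X i + X i)).det =
      (Xᵀ * X).det * (1 + X i ⬝ᵥ ((Xᵀ * X)⁻¹ *ᵥ X i)) := by
    rw [mul_updateRow_add, transpose_transpose, det_add_vecMulVec hgram]
  have hsum := hcauchy_binet.symm.trans hmatrix_det_lemma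
  rw [mul_one_add, add_right_inj] at hsum
  rw [← mul_div_cancel_left₀ (X i ⬝ᵥ _) hgram.ne_zero, ← hsum, sum_div]
  simp only [ite_div, zero_div]
end

section
/- Low-rank approximation guarantee for k-DPPs: if S ~ k-DPP_L(XX^T) with k ≥ r + r/ε − 1, then E[||X X_S^† X_S − X||_F^2] ≤ (1+ε) ||X_{(r)} − X||_F^2, where X_{(r)} is the best rank-r approximation of X in Frobenius norm. -/
/-!
Write `P_S` for the projection onto the row span of `X_S`, and `λ` for the eigenvalues of `XXᵀ`,
so that the sum of the `k × k` principal minors of `XXᵀ` is the elementary symmetric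
polynomial `e_k(λ)`. By the Schur complement ("base times height"),
`det(X_S X_Sᵀ) · ‖xᵢ − xᵢ P_S‖² = det(X_{S+i} X_{S+i}ᵀ)`, so the unnormalised expected error
is `(k + 1) e_{k+1}(λ)`. On the other side, if `Q` projects onto the orthogonal complement of the
columns of `B`, then `‖B − X‖² ≥ tr(Q XXᵀ) = ∑ λᵢ cᵢ` with `0 ≤ cᵢ ≤ 1` and `∑ cᵢ ≥ n − r`, and
double counting gives `(k + 1 − r) e_{k+1}(λ) ≤ (∑ λᵢ cᵢ) e_k(λ)`. The hypothesis on `k` is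
exactly `k + 1 ≤ (1 + ε)(k + 1 − r)`.
-/

open Matrix

/-- The principal submatrix determinant `det(M_{S,S})`. -/
noncomputable def subdet {n : ℕ} (M : Matrix (Fin n) (Fin n) ℝ) (S : Finset (Fin n)) : ℝ :=
  (M.submatrix (fun i : {x // x ∈ S} => (i : Fin n)) (fun j : {x // x ∈ S} => (j : Fin n))).det

/-- The row submatrix `X_S` of `X` (rows indexed by the subset `S`). -/
noncomputable def rowsOf {n d : ℕ} (X : Matrix (Fin n) (Fin d) ℝ) (S : Finset (Fin n)) :
    Matrix {x // x ∈ S} (Fin d) ℝ :=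
  X.submatrix (fun i : {x // x ∈ S} => (i : Fin n)) id

namespace Matrix

variable {ι : Type*} [Fintype ι] [DecidableEq ι]

theorem sum_det_submatrix_eq_of_charpoly_eq {R : Type*} [CommRing R] {A B : Matrix ι ι R}
    (h : A.charpoly = B.charpoly) (k : ℕ) :
    ∑ s ∈ Finset.univ.powersetCard k, (A.submatrix (Subtype.val : s → ι) Subtype.val).det =
      ∑ s ∈ Finset.univ.powersetCard k, (B.submatrix (Subtype.val : s → ι) Subtype.val).det := by
  by_cases hk : k ≤ Fintype.card ι
  · have hA := charpoly_coeff_eq_sum_minors A k hk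
    rw [h, charpoly_coeff_eq_sum_minors B k hk] at hA
    exact ((isUnit_neg_one (α := R)).pow k).mul_left_cancel hA.symm
  · rw [Finset.powersetCard_eq_empty.2 (by simpa using hk), Finset.sum_empty, Finset.sum_empty]

theorem IsHermitian.sum_det_submatrix_eq_sum_prod_eigenvalues {𝕜 : Type*} [RCLike 𝕜]
    {A : Matrix ι ι 𝕜} (hA : A.IsHermitian) (k : ℕ) :
    ∑ s ∈ Finset.univ.powersetCard k, (A.submatrix (Subtype.val : s → ι) Subtype.val).det =
      ∑ s ∈ Finset.univ.powersetCard k, ∏ i ∈ s, (hA.eigenvalues i : 𝕜) := by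
  rw [sum_det_submatrix_eq_of_charpoly_eq (B := diagonal fun i => (hA.eigenvalues i : 𝕜))
    (by rw [hA.charpoly_eq, charpoly_diagonal])]
  refine Finset.sum_congr rfl fun s _ => ?_
  rw [submatrix_diagonal _ _ Subtype.val_injective, det_diagonal]
  exact Finset.prod_coe_sort s fun i => (hA.eigenvalues i : 𝕜)

variable {m p n : Type*} [Fintype m] [Fintype p] [Fintype n] [DecidableEq m] [DecidableEq p]

theorem det_mul_transpose_eq_zero_iff (Y : Matrix m n ℝ) :
    (Y * Yᵀ).det = 0 ↔ ∃ v ≠ 0, v ᵥ* Y = 0 := by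
  rw [← exists_vecMul_eq_zero_iff]
  refine exists_congr fun v => and_congr_right fun _ => ⟨fun hv => ?_, fun hv => ?_⟩
  · rw [← vecMul_vecMul] at hv
    rw [← dotProduct_self_eq_zero]
    nth_rw 2 [← mulVec_transpose]
    rw [dotProduct_mulVec, hv, zero_dotProduct]
  · rw [← vecMul_vecMul, hv, zero_vecMul]

theorem det_fromRows_mul_transpose_eq_zero {Y : Matrix m n ℝ} (hY : (Y * Yᵀ).det = 0)
    (Z : Matrix p n ℝ) : (fromRows Y Z * (fromRows Y Z)ᵀ).det = 0 := by
  obtain ⟨v, hv, hvY⟩ := (det_mul_transpose_eq_zero_iff Y).1 hY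
  refine (det_mul_transpose_eq_zero_iff _).2 ⟨Sum.elim v 0, fun h => hv ?_, ?_⟩
  · simpa using congrArg (· ∘ Sum.inl) h
  · rw [sumElim_vecMul_fromRows, hvY, zero_vecMul, add_zero]

/-- `Y†Y`, the orthogonal projection onto the row space of `Y` when `Y` has full row rank
(otherwise `⁻¹` returns junk). -/
noncomputable def rowSpaceProj (Y : Matrix m n ℝ) : Matrix n n ℝ :=
  Yᵀ * ((Y * Yᵀ)⁻¹ * Y)

theorem transpose_rowSpaceProj (Y : Matrix m n ℝ) : (rowSpaceProj Y)ᵀ = rowSpaceProj Y := by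
  simp only [rowSpaceProj, transpose_mul, transpose_transpose, transpose_nonsing_inv,
    Matrix.mul_assoc]

variable {Y : Matrix m n ℝ} (hY : IsUnit (Y * Yᵀ).det)
include hY

theorem mul_rowSpaceProj : Y * rowSpaceProj Y = Y := by
  rw [rowSpaceProj, ← Matrix.mul_assoc, mul_nonsing_inv_cancel_left _ _ hY]

theorem rowSpaceProj_mul_self : rowSpaceProj Y * rowSpaceProj Y = rowSpaceProj Y := by
  calc rowSpaceProj Y * rowSpaceProj Y = Yᵀ * ((Y * Yᵀ)⁻¹ * (Y * rowSpaceProj Y)) := by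
        simp only [rowSpaceProj, Matrix.mul_assoc]
    _ = rowSpaceProj Y := by rw [mul_rowSpaceProj hY, rowSpaceProj]

theorem det_fromRows_mul_transpose (Z : Matrix p n ℝ) :
    (fromRows Y Z * (fromRows Y Z)ᵀ).det =
      (Y * Yᵀ).det * ((Z * rowSpaceProj Y - Z) * (Z * rowSpaceProj Y - Z)ᵀ).det := by
  let := invertibleOfIsUnitDet _ hY
  rw [transpose_fromRows, fromRows_mul_fromCols, det_fromBlocks₁₁, invOf_eq_nonsing_inv]
  congr 2
  rw [transpose_sub, transpose_mul, transpose_rowSpaceProj, Matrix.sub_mul, Matrix.mul_sub,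
    Matrix.mul_sub, Matrix.mul_assoc Z (rowSpaceProj Y) (_ * _),
    ← Matrix.mul_assoc (rowSpaceProj Y) (rowSpaceProj Y),
    rowSpaceProj_mul_self hY]
  simp only [rowSpaceProj, Matrix.mul_assoc]
  abel

end Matrix

theorem Finset.sum_powersetCard_sum_compl_insert {α M : Type*} [Fintype α] [DecidableEq α]
    [AddCommMonoid M] (k : ℕ) (g : Finset α → α → M) :
    ∑ S ∈ powersetCard k univ, ∑ i ∈ Sᶜ, g (insert i S) i =
      ∑ T ∈ powersetCard (k + 1) univ, ∑ i ∈ T, g T i := by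
  rw [sum_sigma', sum_sigma']
  refine sum_nbij' (fun p => ⟨insert p.2 p.1, p.2⟩) (fun q => ⟨q.1.erase q.2, q.2⟩)
    ?_ ?_ ?_ ?_ fun _ _ => rfl
  · rintro ⟨S, i⟩ hp
    simp only [mem_sigma, mem_powersetCard_univ, mem_compl] at hp ⊢
    exact ⟨by rw [card_insert_of_notMem hp.2, hp.1], mem_insert_self i S⟩
  · rintro ⟨T, i⟩ hq
    simp only [mem_sigma, mem_powersetCard_univ, mem_compl] at hq ⊢
    exact ⟨by rw [card_erase_of_mem hq.2, hq.1, Nat.add_sub_cancel], notMem_erase i T⟩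
  · rintro ⟨S, i⟩ hp
    simp only [mem_sigma, mem_compl] at hp
    simp only [erase_insert hp.2]
  · rintro ⟨T, i⟩ hq
    simp only [mem_sigma] at hq
    simp only [insert_erase hq.2]

section Subsets

open Finset

variable {n d : ℕ} (X : Matrix (Fin n) (Fin d) ℝ) {S : Finset (Fin n)} {i : Fin n}

theorem subdet_mul_transpose (S : Finset (Fin n)) :
    subdet (X * Xᵀ) S = (rowsOf X S * (rowsOf X S)ᵀ).det :=
  rfl

theorem subdet_insert (hi : i ∉ S) :
    subdet (X * Xᵀ) (insert i S) =
      (fromRows (rowsOf X S) (replicateRow Unit (X i)) *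
        (fromRows (rowsOf X S) (replicateRow Unit (X i)))ᵀ).det := by
  let e : {x // x ∈ S} ⊕ Unit ≃ {x // x ∈ insert i S} :=
    ((subtypeInsertEquivOption hi).trans (Equiv.optionEquivSumPUnit _)).symm
  have he : fromRows (rowsOf X S) (replicateRow Unit (X i)) =
      (rowsOf X (insert i S)).submatrix e id := by
    ext (a | a) j <;> rfl
  rw [he, transpose_submatrix, ← submatrix_mul _ _ _ _ _ Function.bijective_id,
    det_submatrix_equiv_self]
  rfl

theorem subdet_insert_eq_zero (hi : i ∉ S) (hS : subdet (X * Xᵀ) S = 0) :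
    subdet (X * Xᵀ) (insert i S) = 0 := by
  rw [subdet_insert X hi]
  exact det_fromRows_mul_transpose_eq_zero (Y := rowsOf X S) hS _

theorem subdet_insert_eq_mul (hi : i ∉ S) (hS : IsUnit (subdet (X * Xᵀ) S)) :
    subdet (X * Xᵀ) (insert i S) =
      subdet (X * Xᵀ) S * ∑ j, ((X * rowSpaceProj (rowsOf X S)) i j - X i j) ^ 2 := by
  rw [subdet_insert X hi, det_fromRows_mul_transpose (Y := rowsOf X S) hS,
    subdet_mul_transpose]
  congr 1
  rw [det_unique]
  simp only [mul_apply, transpose_apply, sq]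
  rfl

theorem mul_rowSpaceProj_apply_of_mem (hS : IsUnit (subdet (X * Xᵀ) S)) (hi : i ∈ S)
    (j : Fin d) : (X * rowSpaceProj (rowsOf X S)) i j = X i j :=
  congrFun (congrFun (mul_rowSpaceProj (Y := rowsOf X S) hS) ⟨i, hi⟩) j

theorem subdet_mul_sum_sq_sub_rowSpaceProj (S : Finset (Fin n)) :
    subdet (X * Xᵀ) S * ∑ i, ∑ j, ((X * rowSpaceProj (rowsOf X S)) i j - X i j) ^ 2 =
      ∑ i ∈ Sᶜ, subdet (X * Xᵀ) (insert i S) := by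
  by_cases hS : subdet (X * Xᵀ) S = 0
  · rw [hS, zero_mul, eq_comm]
    exact sum_eq_zero fun i hi => subdet_insert_eq_zero X (mem_compl.1 hi) hS
  · have hS : IsUnit (subdet (X * Xᵀ) S) := isUnit_iff_ne_zero.2 hS
    rw [mul_sum, ← sum_compl_add_sum S, sum_eq_zero (s := S), add_zero]
    · exact sum_congr rfl fun i hi => (subdet_insert_eq_mul X (mem_compl.1 hi) hS).symm
    · intro i hi
      simp [mul_rowSpaceProj_apply_of_mem X hS hi]

theorem sum_subdet_mul_sum_sq_sub_rowSpaceProj (k : ℕ) :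
    ∑ S ∈ powersetCard k univ,
        subdet (X * Xᵀ) S * ∑ i, ∑ j, ((X * rowSpaceProj (rowsOf X S)) i j - X i j) ^ 2 =
      (k + 1) * ∑ T ∈ powersetCard (k + 1) univ, subdet (X * Xᵀ) T := by
  rw [sum_congr rfl fun S _ => subdet_mul_sum_sq_sub_rowSpaceProj X S,
    sum_powersetCard_sum_compl_insert k fun T (_ : Fin n) => subdet (X * Xᵀ) T, mul_sum]
  refine sum_congr rfl fun T hT => ?_
  rw [sum_const, (mem_powersetCard_univ.1 hT), nsmul_eq_mul]
  push_cast
  rfl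

end Subsets

namespace Matrix

variable {m κ : Type*} [Fintype m] [Fintype κ]

theorem exists_orthonormal_rows_spanning_cols (B : Matrix m κ ℝ) :
    ∃ W : Matrix (Fin B.rank) m ℝ, W * Wᵀ = 1 ∧ Wᵀ * (W * B) = B := by
  let V : Submodule ℝ (EuclideanSpace ℝ m) :=
    (Submodule.span ℝ (Set.range B.col)).map (WithLp.linearEquiv 2 ℝ (m → ℝ)).symm.toLinearMap
  have hV : Module.finrank ℝ V = B.rank := by
    rw [LinearEquiv.finrank_map_eq, rank_eq_finrank_span_cols]
  let b := (stdOrthonormalBasis ℝ V).reindex (finCongr hV)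
  have hinner (x y : V) :
      inner ℝ x y = ∑ a, (x : EuclideanSpace ℝ m) a * (y : EuclideanSpace ℝ m) a := by
    simp [Submodule.coe_inner, PiLp.inner_apply, mul_comm]
  refine ⟨of fun l a => (b l : EuclideanSpace ℝ m) a, ?_, ?_⟩
  · ext l l'
    simp only [mul_apply, of_apply, transpose_apply, one_apply, ← hinner]
    exact orthonormal_iff_ite.1 b.orthonormal l l'
  · ext a j
    have hj : WithLp.toLp 2 (B.col j) ∈ V := ⟨B.col j, Submodule.subset_span ⟨j, rfl⟩, rfl⟩
    have := congrArg (fun v : V => (v : EuclideanSpace ℝ m) a) (b.sum_repr' ⟨_, hj⟩)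
    simp only [Submodule.coe_sum, Submodule.coe_smul, hinner, WithLp.ofLp_sum, WithLp.ofLp_smul,
      Finset.sum_apply, Pi.smul_apply, smul_eq_mul] at this
    rw [mul_apply]
    convert this using 2 with l
    · simp [mul_apply, mul_comm]
    · rfl

theorem exists_isStarProjection_mul_eq_zero [DecidableEq m] (B : Matrix m κ ℝ) :
    ∃ Q : Matrix m m ℝ, IsStarProjection Q ∧ Q * B = 0 ∧ Q.trace = Fintype.card m - B.rank := by
  obtain ⟨W, hWW, hWB⟩ := exists_orthonormal_rows_spanning_cols B
  have hP : IsStarProjection (Wᵀ * W) :=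
    ⟨by rw [IsIdempotentElem, Matrix.mul_assoc, ← Matrix.mul_assoc W, hWW, Matrix.one_mul],
      by simp [IsSelfAdjoint, star_eq_conjTranspose]⟩
  refine ⟨1 - Wᵀ * W, hP.one_sub, ?_, ?_⟩
  · rw [Matrix.sub_mul, Matrix.one_mul, Matrix.mul_assoc, hWB, sub_self]
  · rw [trace_sub, trace_one, trace_mul_comm, hWW, trace_one, Fintype.card_fin]

end Matrix

section Spectral

open scoped ComplexOrder

variable {ι κ : Type*} [Fintype ι] [Fintype κ]

theorem IsStarProjection.posSemidef {𝕜 : Type*} [RCLike 𝕜] {Q : Matrix ι ι 𝕜}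
    (hQ : IsStarProjection Q) : Q.PosSemidef := by
  have h := posSemidef_conjTranspose_mul_self Q
  rwa [← star_eq_conjTranspose, hQ.isSelfAdjoint.star_eq, hQ.isIdempotentElem.eq] at h

theorem Matrix.IsHermitian.exists_trace_mul_eq_sum_eigenvalues_mul [DecidableEq ι]
    {A Q : Matrix ι ι ℝ} (hA : A.IsHermitian) (hQ : IsStarProjection Q) :
    ∃ c : ι → ℝ, (∀ i, 0 ≤ c i ∧ c i ≤ 1) ∧ ∑ i, c i = Q.trace ∧
      (Q * A).trace = ∑ i, hA.eigenvalues i * c i := by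
  set U : Matrix ι ι ℝ := (hA.eigenvectorUnitary : Matrix ι ι ℝ)
  have hU : star U * U = 1 := Unitary.coe_star_mul_self _
  have hU' : U * star U = 1 := Unitary.coe_mul_star_self _
  have hAU : A = U * diagonal hA.eigenvalues * star U := by
    simpa using hA.spectral_theorem
  have hc (P : Matrix ι ι ℝ) (hP : IsStarProjection P) (i : ι) : 0 ≤ (star U * P * U) i i :=
    (hP.posSemidef.conjTranspose_mul_mul_same U).diag_nonneg
  refine ⟨fun i => (star U * Q * U) i i, fun i => ⟨hc Q hQ i, ?_⟩, ?_, ?_⟩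
  · have := hc _ hQ.one_sub i
    rw [Matrix.mul_sub, Matrix.sub_mul, Matrix.mul_one, hU, sub_apply, one_apply_eq] at this
    linarith
  · change (star U * Q * U).trace = _
    rw [trace_mul_cycle, hU', Matrix.one_mul]
  · conv_lhs =>
      rw [hAU, ← Matrix.mul_assoc, ← Matrix.mul_assoc, trace_mul_cycle, ← Matrix.mul_assoc]
    simp [trace, mul_diagonal, mul_comm]

theorem Matrix.trace_mul_transpose_eq_sum_sq (M : Matrix ι κ ℝ) :
    (M * Mᵀ).trace = ∑ i, ∑ j, M i j ^ 2 := by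
  simp [trace, mul_apply, sq]

theorem IsStarProjection.trace_mul_mul_transpose {Q : Matrix ι ι ℝ} (hQ : IsStarProjection Q)
    (M : Matrix ι κ ℝ) : (Q * (M * Mᵀ)).trace = ((Q * M) * (Q * M)ᵀ).trace := by
  have hQt : Qᵀ = Q := hQ.isSelfAdjoint.star_eq
  calc (Q * (M * Mᵀ)).trace = (Q * (Q * (M * Mᵀ))).trace := by
        rw [← Matrix.mul_assoc Q Q, hQ.isIdempotentElem.eq]
    _ = (Q * (M * Mᵀ) * Q).trace := trace_mul_comm _ _
    _ = ((Q * M) * (Q * M)ᵀ).trace := by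
        rw [transpose_mul, hQt]
        simp only [Matrix.mul_assoc]

theorem IsStarProjection.trace_mul_mul_transpose_le [DecidableEq ι] {Q : Matrix ι ι ℝ}
    (hQ : IsStarProjection Q) {B X : Matrix ι κ ℝ} (hQB : Q * B = 0) :
    (Q * (X * Xᵀ)).trace ≤ ∑ i, ∑ j, (B i j - X i j) ^ 2 := by
  have hQX : Q * X = Q * (X - B) := by rw [Matrix.mul_sub, hQB, sub_zero]
  calc (Q * (X * Xᵀ)).trace = (Q * ((X - B) * (X - B)ᵀ)).trace := by
        rw [hQ.trace_mul_mul_transpose, hQ.trace_mul_mul_transpose, hQX]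
    _ ≤ (Q * ((X - B) * (X - B)ᵀ)).trace + ((1 - Q) * ((X - B) * (X - B)ᵀ)).trace := by
        rw [hQ.one_sub.trace_mul_mul_transpose, trace_mul_transpose_eq_sum_sq]
        exact le_add_of_nonneg_right (by positivity)
    _ = ∑ i, ∑ j, (B i j - X i j) ^ 2 := by
        rw [← trace_add, ← Matrix.add_mul, add_sub_cancel, Matrix.one_mul,
          trace_mul_transpose_eq_sum_sq]
        simp only [Matrix.sub_apply, sq]
        congr! 2
        ring

end Spectral

section ElementarySymmetric

open Finset

variable {ι : Type*} [Fintype ι] [DecidableEq ι]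

theorem sum_sub_card_compl_le_sum_of_le_one {c : ι → ℝ} (hc : ∀ i, c i ≤ 1) (T : Finset ι) :
    ∑ i, c i - (Fintype.card ι - #T) ≤ ∑ i ∈ T, c i := by
  have hcompl : ∑ i ∈ Tᶜ, c i ≤ #Tᶜ := by
    simpa using sum_le_sum fun i (_ : i ∈ Tᶜ) => hc i
  rw [card_compl, Nat.cast_sub (card_le_univ T)] at hcompl
  linarith [sum_add_sum_compl T c]

theorem sum_prod_powersetCard_succ_le {k r : ℕ} {lam c : ι → ℝ} (hlam : ∀ i, 0 ≤ lam i)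
    (hc : ∀ i, 0 ≤ c i ∧ c i ≤ 1) (hcs : (Fintype.card ι : ℝ) - r ≤ ∑ i, c i) :
    ((k : ℝ) + 1 - r) * ∑ T ∈ powersetCard (k + 1) univ, ∏ i ∈ T, lam i ≤
      (∑ i, lam i * c i) * ∑ S ∈ powersetCard k univ, ∏ i ∈ S, lam i := by
  have hprod (T : Finset ι) : 0 ≤ ∏ i ∈ T, lam i := prod_nonneg fun i _ => hlam i
  calc ((k : ℝ) + 1 - r) * ∑ T ∈ powersetCard (k + 1) univ, ∏ i ∈ T, lam i
      ≤ ∑ T ∈ powersetCard (k + 1) univ, ∑ i ∈ T, c i * ∏ j ∈ T, lam j := by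
        rw [mul_sum]
        refine sum_le_sum fun T hT => ?_
        rw [← sum_mul]
        refine mul_le_mul_of_nonneg_right ?_ (hprod T)
        have := sum_sub_card_compl_le_sum_of_le_one (fun i => (hc i).2) T
        rw [mem_powersetCard_univ.1 hT] at this
        push_cast at this
        linarith
    _ = ∑ S ∈ powersetCard k univ, ∑ i ∈ Sᶜ, lam i * c i * ∏ j ∈ S, lam j := by
        rw [← sum_powersetCard_sum_compl_insert]
        refine sum_congr rfl fun S _ => sum_congr rfl fun i hi => ?_
        rw [prod_insert (mem_compl.1 hi)]
        ring
    _ ≤ ∑ S ∈ powersetCard k univ, ∑ i, lam i * c i * ∏ j ∈ S, lam j := by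
        refine sum_le_sum fun S _ => sum_le_sum_of_subset_of_nonneg (subset_univ _) fun i _ _ => ?_
        exact mul_nonneg (mul_nonneg (hlam i) (hc i).1) (hprod S)
    _ = (∑ i, lam i * c i) * ∑ S ∈ powersetCard k univ, ∏ i ∈ S, lam i := by
        rw [sum_comm, sum_mul]
        simp only [mul_sum]

end ElementarySymmetric

section LowRank

open Finset

variable {n d : ℕ} (X : Matrix (Fin n) (Fin d) ℝ)

theorem subdet_mul_transpose_nonneg (S : Finset (Fin n)) : 0 ≤ subdet (X * Xᵀ) S := by
  rw [subdet_mul_transpose]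
  simpa using (posSemidef_self_mul_conjTranspose (rowsOf X S)).det_nonneg

theorem sum_subdet_powersetCard_succ_le {B : Matrix (Fin n) (Fin d) ℝ} {r : ℕ} (hB : B.rank ≤ r)
    (k : ℕ) :
    ((k : ℝ) + 1 - r) * ∑ T ∈ powersetCard (k + 1) univ, subdet (X * Xᵀ) T ≤
      (∑ i, ∑ j, (B i j - X i j) ^ 2) * ∑ S ∈ powersetCard k univ, subdet (X * Xᵀ) S := by
  have hX : (X * Xᵀ).PosSemidef := by simpa using posSemidef_self_mul_conjTranspose X
  obtain ⟨Q, hQ, hQB, hQtr⟩ := exists_isStarProjection_mul_eq_zero B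
  obtain ⟨c, hc, hcs, hQX⟩ := hX.isHermitian.exists_trace_mul_eq_sum_eigenvalues_mul hQ
  have hsum (k : ℕ) : ∑ S ∈ powersetCard k univ, subdet (X * Xᵀ) S =
      ∑ S ∈ powersetCard k univ, ∏ i ∈ S, hX.isHermitian.eigenvalues i :=
    hX.isHermitian.sum_det_submatrix_eq_sum_prod_eigenvalues k
  rw [hsum, hsum]
  refine (sum_prod_powersetCard_succ_le hX.eigenvalues_nonneg hc ?_).trans ?_
  · rw [hcs, hQtr, Fintype.card_fin]
    exact sub_le_sub_left (Nat.cast_le.2 hB) _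
  · rw [← hQX]
    exact mul_le_mul_of_nonneg_right (hQ.trace_mul_mul_transpose_le hQB)
      (sum_nonneg fun S _ => prod_nonneg fun i _ => hX.eigenvalues_nonneg i)

end LowRank

theorem kdpp_low_rank_approximation_general {n d : ℕ} (X : Matrix (Fin n) (Fin d) ℝ)
    (r k : ℕ) (ε : ℝ) (hε : 0 < ε)
    (hk : (k : ℝ) ≥ (r : ℝ) + (r : ℝ) / ε - 1)
    (B : Matrix (Fin n) (Fin d) ℝ) (hB : B.rank ≤ r) :
    ∑ S ∈ Finset.powersetCard k (Finset.univ : Finset (Fin n)),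
      (subdet (X * Xᵀ) S /
          (∑ T ∈ Finset.powersetCard k (Finset.univ : Finset (Fin n)), subdet (X * Xᵀ) T)) *
        (∑ i, ∑ j,
          ((X * ((rowsOf X S)ᵀ * (((rowsOf X S) * (rowsOf X S)ᵀ)⁻¹ * rowsOf X S))) i j
            - X i j) ^ 2)
      ≤ (1 + ε) * ∑ i, ∑ j, (B i j - X i j) ^ 2 := by
  set Z := ∑ T ∈ Finset.powersetCard k Finset.univ, subdet (X * Xᵀ) T
  set Z' := ∑ T ∈ Finset.powersetCard (k + 1) Finset.univ, subdet (X * Xᵀ) T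
  have hZ : 0 ≤ Z := Finset.sum_nonneg fun T _ => subdet_mul_transpose_nonneg X T
  have hZ' : 0 ≤ Z' := Finset.sum_nonneg fun T _ => subdet_mul_transpose_nonneg X T
  have hcoef : (k : ℝ) + 1 ≤ (1 + ε) * ((k : ℝ) + 1 - r) := by
    have : (r : ℝ) ≤ ε * ((k : ℝ) + 1 - r) := by
      rw [← div_le_iff₀' hε]
      linarith
    linarith
  change ∑ S ∈ _, _ / Z * ∑ i, ∑ j, ((X * rowSpaceProj (rowsOf X S)) i j - X i j) ^ 2 ≤ _
  simp_rw [div_mul_eq_mul_div, ← Finset.sum_div, sum_subdet_mul_sum_sq_sub_rowSpaceProj]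
  rcases hZ.eq_or_lt with hZ | hZ
  · rw [← hZ, div_zero]
    positivity
  rw [div_le_iff₀ hZ]
  calc ((k : ℝ) + 1) * Z' ≤ (1 + ε) * (((k : ℝ) + 1 - r) * Z') := by
        rw [← mul_assoc]
        exact mul_le_mul_of_nonneg_right hcoef hZ'
    _ ≤ (1 + ε) * ((∑ i, ∑ j, (B i j - X i j) ^ 2) * Z) :=
        mul_le_mul_of_nonneg_left (sum_subdet_powersetCard_succ_le X hB k) (by positivity)
    _ = _ := by ring

/-- Low-rank approximation guarantee for `k`-DPPs: if `S ~ k-DPP_L(XXᵀ)` with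
`k ≥ r + r/ε − 1`, then `E‖X X_S† X_S − X‖_F² ≤ (1+ε)‖X_{(r)} − X‖_F²`, where the
right-hand side (the best rank-`r` Frobenius approximation error) is expressed by
quantifying over all matrices `B` of rank at most `r`.  (On the support of the `k`-DPP,
`X_S` has full row rank and `X_S† X_S = X_Sᵀ(X_S X_Sᵀ)⁻¹X_S`.) -/
theorem kdpp_low_rank_approximation {n d : ℕ} (X : Matrix (Fin n) (Fin d) ℝ)
    (r k : ℕ) (ε : ℝ) (hε : 0 < ε) (hrk : r ≤ k)
    (hk : (k : ℝ) ≥ (r : ℝ) + (r : ℝ) / ε - 1)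
    (B : Matrix (Fin n) (Fin d) ℝ) (hB : B.rank ≤ r) :
    ∑ S ∈ Finset.powersetCard k (Finset.univ : Finset (Fin n)),
      (subdet (X * Xᵀ) S /
          (∑ T ∈ Finset.powersetCard k (Finset.univ : Finset (Fin n)), subdet (X * Xᵀ) T)) *
        (∑ i, ∑ j,
          ((X * ((rowsOf X S)ᵀ * (((rowsOf X S) * (rowsOf X S)ᵀ)⁻¹ * rowsOf X S))) i j
            - X i j) ^ 2)
      ≤ (1 + ε) * ∑ i, ∑ j, (B i j - X i j) ^ 2 :=
  kdpp_low_rank_approximation_general X r k ε hε hk B hB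
end
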